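/- Let V be a Hermitian Clifford module as above (Lorentzian relations, e_0 Hermitian, e_j skew-Hermitian for j ≥ 1). If G(φ) = φ where G = ε e_1 e_0, then for any real numbers a, b and any vector w = Σ_{j≥2} w_j e_j (spacelike, tangent to the boundary), ⟨(a + b e_1 e_0 + w e_0)φ, φ⟩ = (a + ε b) ‖φ‖². In particular the term ⟨w e_0 φ, φ⟩ vanishes. -/
import Mathlib


open scoped ComplexInnerProductSpace

/-- Boundary integrand under the chiral condition G(φ) = φ. -/
theorem chiral_boundary_integrand {V : Type*} [NormedAddCommGroup V] [InnerProductSpace ℂ V]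
    (n : ℕ) (hn : 2 ≤ n) (e : Fin (n + 1) → (V →ₗ[ℂ] V))
    (hclif : ∀ a b : Fin (n + 1), e a ∘ₗ e b + e b ∘ₗ e a
      = (if a = b then (if a = 0 then (2 : ℂ) else -2) else 0) • (LinearMap.id : V →ₗ[ℂ] V))
    (hherm0 : ∀ x y : V, ⟪e 0 x, y⟫ = ⟪x, e 0 y⟫)
    (hskew : ∀ a : Fin (n + 1), a ≠ 0 → ∀ x y : V, ⟪e a x, y⟫ = -⟪x, e a y⟫)
    (ε : ℝ) (hε : ε = 1 ∨ ε = -1)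
    (φ : V) (hG : (ε : ℂ) • e 1 (e 0 φ) = φ)
    (a b : ℝ) (w : Fin (n + 1) → ℝ) (hw0 : w 0 = 0) (hw1 : w 1 = 0) :
    ⟪(a : ℂ) • φ + (b : ℂ) • e 1 (e 0 φ) + (∑ j, (w j : ℂ) • e j) (e 0 φ), φ⟫
      = (((a + ε * b) * ‖φ‖ ^ 2 : ℝ) : ℂ)
    ∧ ⟪(∑ j, (w j : ℂ) • e j) (e 0 φ), φ⟫ = 0 := by
  have hε2 : (ε : ℂ) * ε = 1 := by rcases hε with h | h <;> simp [h]
  -- anticommutation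
  have hanti : ∀ p q : Fin (n + 1), p ≠ q → ∀ x : V, e p (e q x) = - e q (e p x) := by
    intro p q hpq x
    have := congrArg (fun f : V →ₗ[ℂ] V => f x) (hclif p q)
    simp [if_neg hpq, LinearMap.add_apply, LinearMap.comp_apply] at this
    linear_combination (norm := module) this
  -- squares
  have hsq0 : ∀ x : V, e 0 (e 0 x) = x := by
    intro x
    have := congrArg (fun f : V →ₗ[ℂ] V => f x) (hclif 0 0)
    simp [LinearMap.add_apply, LinearMap.comp_apply, two_smul] at this
    have h2 : (2 : ℂ) • e 0 (e 0 x) = (2 : ℂ) • x := by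
      rw [two_smul, two_smul]; linear_combination (norm := module) this
    have := smul_right_injective V (by norm_num : (2 : ℂ) ≠ 0) h2
    exact this
  have h10 : (1 : Fin (n + 1)) ≠ 0 := by
    have : (1 : ℕ) < n + 1 := by omega
    simp [Fin.ext_iff, Fin.val_one, Nat.mod_eq_of_lt this]
  have hsq1 : ∀ x : V, e 1 (e 1 x) = -x := by
    intro x
    have := congrArg (fun f : V →ₗ[ℂ] V => f x) (hclif 1 1)
    have hn0 : n ≠ 0 := by omega
    simp [if_neg h10, hn0, LinearMap.add_apply, LinearMap.comp_apply] at this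
    have h2 : (2 : ℂ) • e 1 (e 1 x) = (2 : ℂ) • (-x) := by
      rw [two_smul, two_smul]; linear_combination (norm := module) this
    exact smul_right_injective V (by norm_num : (2 : ℂ) ≠ 0) h2
  -- e1 e0 φ = ε φ
  have heps : e 1 (e 0 φ) = (ε : ℂ) • φ := by
    have := congrArg (fun x => (ε : ℂ) • x) hG
    simp only [smul_smul, hε2, one_smul] at this
    exact this
  -- e1 φ = -ε e0 φ
  have he1φ : e 1 φ = -((ε : ℂ) • e 0 φ) := by
    conv_lhs => rw [← hG]
    rw [map_smul, hsq1]
    simp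
  -- key vanishing
  have key : ∀ j : Fin (n + 1), j ≠ 0 → j ≠ 1 → ⟪e j (e 0 φ), φ⟫ = 0 := by
    intro j hj0 hj1
    set c := (⟪e j (e 0 φ), φ⟫ : ℂ) with hc
    have step : c = -c := by
      calc c = ⟪e j (e 0 φ), (ε : ℂ) • e 1 (e 0 φ)⟫ := by rw [hG]
        _ = (ε : ℂ) * ⟪e j (e 0 φ), e 1 (e 0 φ)⟫ := inner_smul_right _ _ _
        _ = (ε : ℂ) * (-⟪e 1 (e j (e 0 φ)), e 0 φ⟫) := by
              rw [hskew 1 h10 (e j (e 0 φ)) (e 0 φ)]; ring_nf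
        _ = (ε : ℂ) * ⟪e j (e 1 (e 0 φ)), e 0 φ⟫ := by
              rw [hanti 1 j (Ne.symm hj1)]; simp
        _ = (ε : ℂ) * ⟪e 0 (e j (e 1 (e 0 φ))), φ⟫ := by rw [hherm0]
        _ = (ε : ℂ) * ⟪e j (e 1 φ), φ⟫ := by
              rw [hanti 0 j (Ne.symm hj0), hanti 0 1 (Ne.symm h10), hsq0]
              simp
        _ = (ε : ℂ) * ⟪-(ε : ℂ) • e j (e 0 φ), φ⟫ := by
              rw [he1φ]; simp
        _ = (ε : ℂ) * ((starRingEnd ℂ) (-(ε : ℂ)) * c) := by rw [inner_smul_left]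
        _ = -c := by
              simp only [map_neg, Complex.conj_ofReal]
              linear_combination (-c) * hε2
    have : c + c = 0 := by linear_combination step
    have := add_self_eq_zero.mp this
    exact this
  -- sum vanishes
  have hsum : ⟪(∑ j, (w j : ℂ) • e j) (e 0 φ), φ⟫ = 0 := by
    rw [LinearMap.sum_apply]
    rw [sum_inner]
    apply Finset.sum_eq_zero
    intro j _
    rw [LinearMap.smul_apply, inner_smul_left, Complex.conj_ofReal]
    by_cases hj0 : j = 0
    · simp [hj0, hw0]
    by_cases hj1 : j = 1
    · simp [hj1, hw1]
    rw [key j hj0 hj1, mul_zero]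
  refine ⟨?_, hsum⟩
  rw [inner_add_left, inner_add_left, hsum, add_zero, heps, inner_smul_left,
    inner_smul_left, inner_smul_left, inner_self_eq_norm_sq_to_K]
  simp only [Complex.conj_ofReal, RCLike.ofReal_alg, Complex.real_smul]
  push_cast
  ring
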